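/- arXiv:1205.0174 — 5 statements merged into one kernel-verified Lean document; each statement's English description precedes it below -/
import Mathlib

section
/- Let H be an infinite hyperreal and let x, y be finite (not infinite) hyperreals satisfying the equation (y + 2 + 2/H)^2 = (x^2 + y^2)·(1 + 4/H + 4/H^2). Then the shadows x₀ = st(x) and y₀ = st(y) satisfy y₀ = x₀^2/4 − 1; that is, the finite portion of Leibniz's status transitus ellipse with one focus at the infinite point (0,H) is infinitely close to the real parabola y = x²/4 − 1. -/
/-!
The standard part is a ring homomorphism on the finite elements of an ordered field, and it kills
infinitesimals. With `ε = H⁻¹` infinitesimal, the ellipse equation is a polynomial identity between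
the finite elements `x`, `y`, `ε`; its standard part is `(y₀ + 2)² = x₀² + y₀²`, i.e.
`4 y₀ + 4 = x₀²`.
-/

namespace ArchimedeanClass

variable {K : Type*} [Field K] [LinearOrder K] [IsOrderedRing K]

noncomputable def FiniteElement.stdPartHom : FiniteElement K →+* ℝ :=
  (Classical.ofNonempty : FiniteResidueField K →+*o ℝ).toRingHom.comp
    (FiniteResidueField.mk : FiniteElement K →+*o _).toRingHom

theorem stdPart_eq_stdPartHom {x : K} (hx : 0 ≤ mk x) :
    stdPart x = FiniteElement.stdPartHom (.mk x hx) :=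
  stdPart_of_mk_nonneg _ hx

theorem stdPart_eq_sq_div_four_sub_one {H x y : K} (hH : mk H < 0) (hx : 0 ≤ mk x)
    (hy : 0 ≤ mk y) (heq : (y + 2 + 2 / H) ^ 2 = (x ^ 2 + y ^ 2) * (1 + 4 / H + 4 / H ^ 2)) :
    stdPart y = stdPart x ^ 2 / 4 - 1 := by
  have hε : 0 < mk H⁻¹ := by simpa using Or.inl hH
  let X := FiniteElement.mk x hx
  let Y := FiniteElement.mk y hy
  let E := FiniteElement.mk H⁻¹ hε.le
  -- The ring operations of `FiniteElement K` are those of `K`, so the identity lifts by `rfl`.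
  have hXYE : (Y + 2 + 2 * E) ^ 2 = (X ^ 2 + Y ^ 2) * (1 + 4 * E + 4 * E ^ 2) :=
    FiniteElement.ext (by simp only [div_eq_mul_inv, ← inv_pow] at heq; exact heq)
  have hE : FiniteElement.stdPartHom E = 0 := by
    rw [← stdPart_eq_stdPartHom, stdPart_eq_zero]
    exact hε.ne'
  have hstd := congrArg FiniteElement.stdPartHom hXYE
  simp only [map_add, map_mul, map_pow, map_ofNat, map_one, hE] at hstd
  rw [stdPart_eq_stdPartHom hx, stdPart_eq_stdPartHom hy]
  linear_combination hstd / 4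

end ArchimedeanClass

/-- Leibniz's status transitus ellipse with one focus at the infinite point `(0, H)`:
if `H` is an infinite hyperreal and `x`, `y` are finite hyperreals satisfying the
polynomial ellipse equation `(y + 2 + 2/H)^2 = (x^2 + y^2) * (1 + 4/H + 4/H^2)`,
then the shadows satisfy `st y = (st x)^2 / 4 - 1`, i.e. the finite portion of the
status transitus is infinitely close to the real parabola `y = x^2/4 - 1`. -/
theorem status_transitus_shadow_parabola (H x y : ℝ*)
    (hH : Hyperreal.Infinite H) (hx : ¬ Hyperreal.Infinite x) (hy : ¬ Hyperreal.Infinite y)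
    (heq : (y + 2 + 2 / H) ^ 2 = (x ^ 2 + y ^ 2) * (1 + 4 / H + 4 / H ^ 2)) :
    Hyperreal.st y = (Hyperreal.st x) ^ 2 / 4 - 1 := by
  rw [Hyperreal.st_eq, Hyperreal.st_eq]
  rw [Hyperreal.infinite_iff] at hH hx hy
  exact ArchimedeanClass.stdPart_eq_sq_div_four_sub_one hH (not_lt.1 hx) (not_lt.1 hy) heq
end

section
/- For all hyperreals x, y, H with H ≠ 0, the equation 4·(x² + y²)·(x² + (H − y)²) = ((H + 2)² − (x² + y²) − (x² + (H − y)²))² holds if and only if (y + 2 + 2/H)² = (x² + y²)·(1 + 4/H + 4/H²). (Thus the status transitus for infinite H satisfies the final polynomial form of the ellipse equation exactly when it satisfies the twice-squared focal-sum form.) -/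
/-!
With `A = x² + y²` and `B = x² + (H - y)²` one has `B - A = H² - 2Hy`, so the discriminant
`((H + 2)² - A - B)² - 4AB` collapses to `4((Hy + 2H + 2)² - A(H + 2)²)`, which is `4H⁴` times
the difference of the two sides of `(y + 2 + 2/H)² = A(1 + 4/H + 4/H²)`.
-/

section Field

variable {K : Type*} [Field K]

theorem focal_discriminant_eq (x y H : K) :
    ((H + 2) ^ 2 - (x ^ 2 + y ^ 2) - (x ^ 2 + (H - y) ^ 2)) ^ 2
        - 4 * (x ^ 2 + y ^ 2) * (x ^ 2 + (H - y) ^ 2)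
      = 4 * ((H * y + 2 * H + 2) ^ 2 - (x ^ 2 + y ^ 2) * (H + 2) ^ 2) := by
  ring

theorem polynomial_form_sub_eq (x y : K) {H : K} (hH : H ≠ 0) :
    (y + 2 + 2 / H) ^ 2 - (x ^ 2 + y ^ 2) * (1 + 4 / H + 4 / H ^ 2)
      = ((H * y + 2 * H + 2) ^ 2 - (x ^ 2 + y ^ 2) * (H + 2) ^ 2) / H ^ 2 := by
  field_simp
  ring

theorem focal_form_iff_polynomial_form [NeZero (2 : K)] (x y : K) {H : K} (hH : H ≠ 0) :
    4 * (x ^ 2 + y ^ 2) * (x ^ 2 + (H - y) ^ 2)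
      = ((H + 2) ^ 2 - (x ^ 2 + y ^ 2) - (x ^ 2 + (H - y) ^ 2)) ^ 2
    ↔ (y + 2 + 2 / H) ^ 2 = (x ^ 2 + y ^ 2) * (1 + 4 / H + 4 / H ^ 2) := by
  have h4 : (4 : K) ≠ 0 := by
    rw [show (4 : K) = 2 * 2 by norm_num]
    exact mul_ne_zero two_ne_zero two_ne_zero
  rw [eq_comm, ← sub_eq_zero, focal_discriminant_eq, ← sub_eq_zero (a := (y + 2 + 2 / H) ^ 2),
    polynomial_form_sub_eq x y hH, mul_eq_zero, div_eq_zero_iff]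
  simp only [h4, pow_eq_zero_iff two_ne_zero, hH, false_or, or_false]

end Field

/-- For all hyperreals `x`, `y`, `H` with `H ≠ 0`, the twice-squared focal-sum form of
the ellipse equation holds if and only if the final polynomial form does; in particular
the status transitus for infinite `H` satisfies the one exactly when it satisfies the
other. -/
theorem status_transitus_equation_equiv (x y H : ℝ*) (hH : H ≠ 0) :
    4 * (x ^ 2 + y ^ 2) * (x ^ 2 + (H - y) ^ 2)
      = ((H + 2) ^ 2 - (x ^ 2 + y ^ 2) - (x ^ 2 + (H - y) ^ 2)) ^ 2
    ↔ (y + 2 + 2 / H) ^ 2 = (x ^ 2 + y ^ 2) * (1 + 4 / H + 4 / H ^ 2) :=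
  focal_form_iff_polynomial_form x y hH
end

section
/- (The derivative as the standard part of the differential quotient, formula f'(x) = st(Δy/Δx).) Let f : ℝ → ℝ, let x, L be real numbers with `HasDerivAt f L x`, and let ε be a nonzero infinitesimal hyperreal. Then the hyperreal (f*(x + ε) − f(x))/ε is finite and its standard part equals L, where f* denotes the natural extension of f to the hyperreals. -/
/-!
A nonzero infinitesimal `ε` is the germ, along the hyperfilter, of a sequence tending to `0`
through nonzero values. The differential quotient is then the germ of the sequence of slopes
`t⁻¹ • (f (x + t) - f x)` evaluated along it, which tends to `L`; a hyperreal represented by a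
sequence converging to `L` is finite with standard part `L`.
-/

/-- The natural extension `f* : ℝ* → ℝ*` of `f : ℝ → ℝ`, acting componentwise on
representing sequences. -/
noncomputable def Hyperreal.extend (f : ℝ → ℝ) : ℝ* → ℝ* := Filter.Germ.map f

set_option linter.deprecated false

open Filter Topology

theorem Filter.Germ.Tendsto.map {α β γ : Type*} {l : Filter α} {la : Filter β} {lb : Filter γ}
    {g : Germ l β} (hg : g.Tendsto la) {f : β → γ} (hf : Tendsto f la lb) :
    (g.map f).Tendsto lb := by
  induction g using Germ.inductionOn
  exact hf.comp hg

namespace Hyperreal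

theorem tendsto_nhdsNE_zero_of_infinitesimal {x : ℝ*} (h0 : x ≠ 0) (hx : Infinitesimal x) :
    x.Tendsto (𝓝[≠] 0) := by
  obtain ⟨s, rfl⟩ := ofSeq_surjective x
  rw [tendsto_ofSeq, tendsto_nhdsWithin_iff]
  exact ⟨isSt_ofSeq_iff_tendsto.1 hx, Ultrafilter.eventually_not.2 fun h ↦ h0 (Germ.coe_eq.2 h)⟩

theorem not_infinite_of_tendsto {x : ℝ*} {r : ℝ} (hx : x.Tendsto (𝓝 r)) : ¬Infinite x := by
  rw [infinite_iff, not_lt]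
  exact archimedeanClassMk_nonneg_of_tendsto hx

theorem st_eq_of_tendsto {x : ℝ*} {r : ℝ} (hx : x.Tendsto (𝓝 r)) : st x = r := by
  rw [st_eq, stdPart_of_tendsto hx]

theorem extend_add_sub_div_eq_map (f : ℝ → ℝ) (x : ℝ) (h : ℝ*) :
    (extend f (x + h) - f x) / h = h.map fun t ↦ t⁻¹ • (f (x + t) - f x) := by
  obtain ⟨s, rfl⟩ := ofSeq_surjective h
  exact Germ.coe_eq.2 (.of_forall fun n ↦ div_eq_inv_mul ..)

end Hyperreal

/-- The derivative as the standard part of the differential quotient,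
`f'(x) = st (Δy/Δx)`: if `HasDerivAt f L x` and `ε` is a nonzero infinitesimal, then
`(f*(x + ε) − f(x))/ε` is finite with standard part `L`. -/
theorem deriv_eq_st_differential_quotient (f : ℝ → ℝ) (x L : ℝ)
    (hf : HasDerivAt f L x) (ε : ℝ*) (hε : ε ≠ 0) (hinf : Hyperreal.Infinitesimal ε) :
    ¬ Hyperreal.Infinite ((Hyperreal.extend f ((x : ℝ*) + ε) - (f x : ℝ*)) / ε) ∧
      Hyperreal.st ((Hyperreal.extend f ((x : ℝ*) + ε) - (f x : ℝ*)) / ε) = L := by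
  have hq := (Hyperreal.tendsto_nhdsNE_zero_of_infinitesimal hε hinf).map hf.tendsto_slope_zero
  rw [Hyperreal.extend_add_sub_div_eq_map]
  exact ⟨Hyperreal.not_infinite_of_tendsto hq, Hyperreal.st_eq_of_tendsto hq⟩
end

section
/- (Any ordered field properly containing the reals contains nonzero infinitesimals.) Let K be a linearly ordered field and φ : ℝ →+* K a ring homomorphism that is not surjective. Then there exists ε ∈ K with ε ≠ 0 and |ε| < φ(δ) for every real δ > 0. -/
/-!
Pick `x ∈ K` outside the image of `φ`. If `|x| ≤ φ r` for some real `r`, then `x` lies between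
two reals and has a "standard part" `s = sup {r | φ r ≤ x}`; `x - φ s` is nonzero, and it is
infinitesimal because `φ (s - δ) < x < φ (s + δ)` for every `δ > 0`. Otherwise `|x|` exceeds every
real, and `|x|⁻¹` is a nonzero infinitesimal.
-/

section

variable {K : Type*} [Field K] [LinearOrder K] [IsStrictOrderedRing K]

def IsInfinitesimal (φ : ℝ →+* K) (e : K) : Prop :=
  ∀ δ : ℝ, 0 < δ → |e| < φ δ

variable (φ : ℝ →+* K)

theorem Real.ringHom_strictMono : StrictMono φ :=
  (ringHom_monotone (fun _ ↦ Real.isSquare_iff.mpr) φ).strictMono_of_injective φ.injective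

theorem isInfinitesimal_inv_of_forall_lt {y : K} (hy : ∀ r : ℝ, φ r < y) :
    IsInfinitesimal φ y⁻¹ := by
  intro δ hδ
  have hφδ : 0 < φ δ⁻¹ := by
    simpa using Real.ringHom_strictMono φ (inv_pos.mpr hδ)
  rw [abs_of_pos (inv_pos.mpr (hφδ.trans (hy _)))]
  simpa using inv_strictAnti₀ hφδ (hy δ⁻¹)

theorem isInfinitesimal_sub_map_sSup {x : K} {a b : ℝ} (ha : φ a ≤ x) (hb : x ≤ φ b) :
    IsInfinitesimal φ (x - φ (sSup {r | φ r ≤ x})) := by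
  set S : Set ℝ := {r | φ r ≤ x}
  have hne : S.Nonempty := ⟨a, ha⟩
  have hbdd : BddAbove S :=
    ⟨b, fun r hr ↦ (Real.ringHom_strictMono φ).le_iff_le.mp (hr.trans hb)⟩
  intro δ hδ
  have hlower : φ (sSup S - δ) < x := by
    obtain ⟨r, hrS, hr⟩ := exists_lt_of_lt_csSup hne (sub_lt_self _ hδ)
    exact (Real.ringHom_strictMono φ hr).trans_le hrS
  have hupper : x < φ (sSup S + δ) := by
    by_contra! h
    linarith [le_csSup hbdd (show sSup S + δ ∈ S from h)]
  rw [map_sub] at hlower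
  rw [map_add] at hupper
  exact abs_sub_lt_iff.mpr ⟨by linarith, by linarith⟩

end

/-- Any linearly ordered field properly containing the reals contains nonzero
infinitesimals: if `φ : ℝ →+* K` is a ring homomorphism into a linearly ordered field
that is not surjective, then there exists `ε ∈ K` with `ε ≠ 0` and `|ε| < φ δ` for
every real `δ > 0`. -/
theorem exists_nonzero_infinitesimal_of_not_surjective {K : Type*}
    [Field K] [LinearOrder K] [IsStrictOrderedRing K] (φ : ℝ →+* K) (hφ : ¬ Function.Surjective φ) :
    ∃ ε : K, ε ≠ 0 ∧ ∀ δ : ℝ, 0 < δ → |ε| < φ δ := by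
  obtain ⟨x, hx⟩ := not_forall.mp hφ
  by_cases hfinite : ∃ r : ℝ, |x| ≤ φ r
  · obtain ⟨r, hr⟩ := hfinite
    obtain ⟨hlow, hup⟩ := abs_le.mp hr
    exact ⟨_, sub_ne_zero.mpr fun h ↦ hx ⟨_, h.symm⟩,
      isInfinitesimal_sub_map_sSup φ (a := -r) (by rwa [map_neg]) hup⟩
  · push Not at hfinite
    exact ⟨|x|⁻¹, inv_ne_zero (map_zero φ ▸ hfinite 0).ne',
      isInfinitesimal_inv_of_forall_lt φ hfinite⟩
end

section
/- (The quotient of the sequence ring by a maximal ideal containing the eventually-zero sequences is a proper field extension of ℝ.) Let M be a maximal ideal of the ring ℕ → ℝ (with pointwise operations) that contains every sequence vanishing at all but finitely many indices. Then the ring homomorphism ℝ → (ℕ → ℝ)/M sending a real c to the residue class of the constant sequence c is injective, and the residue class of the sequence n ↦ 1/(n+1) is nonzero and does not lie in the range of this homomorphism. -/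
/-!
If `s ∈ M` had only finitely many zeros, adding to `s` the indicator of its zero set (which lies
in `M`) would give an element of `M` without zeros, i.e. a unit. So every element of `M` vanishes
infinitely often. Now `n ↦ 1/(n+1)` never vanishes, and `c - 1/(n+1)` vanishes at most once since
`n ↦ 1/(n+1)` is injective; hence neither lies in `M`.
-/

lemma Ideal.infinite_setOf_eq_zero_of_mem {ι K : Type*} [DivisionRing K] {M : Ideal (ι → K)}
    (hM : M ≠ ⊤) (hez : ∀ s : ι → K, {i | s i ≠ 0}.Finite → s ∈ M) {s : ι → K} (hs : s ∈ M) :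
    {i | s i = 0}.Infinite := by
  classical
  intro hfin
  set u : ι → K := fun i => if s i = 0 then 1 else 0
  have hu : u ∈ M := hez u (hfin.subset fun i hi => by by_contra h; simp_all [u])
  have hunit : IsUnit (s + u) :=
    Pi.isUnit_iff.mpr fun i => isUnit_iff_ne_zero.mpr <| by by_cases h : s i = 0 <;> simp [u, h]
  exact hM (M.eq_top_of_isUnit_mem (M.add_mem hs hu) hunit)

lemma injective_one_div_natCast_add_one : Function.Injective fun n : ℕ => 1 / ((n : ℝ) + 1) := by
  intro m n h
  simpa using h

/-- The quotient of the sequence ring `ℕ → ℝ` by a maximal ideal `M` containing the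
eventually-zero sequences is a proper field extension of `ℝ`: the ring homomorphism
sending a real `c` to the residue class of the constant sequence `c` is injective, and
the residue class of the sequence `n ↦ 1/(n+1)` is nonzero and not in its range. -/
theorem quotient_by_maximal_ideal_proper_extension (M : Ideal (ℕ → ℝ))
    (hM : M.IsMaximal) (hez : ∀ s : ℕ → ℝ, ({n | s n ≠ 0} : Set ℕ).Finite → s ∈ M) :
    Function.Injective ((Ideal.Quotient.mk M).comp (Pi.constRingHom ℕ ℝ)) ∧
      Ideal.Quotient.mk M (fun n : ℕ => 1 / ((n : ℝ) + 1)) ≠ 0 ∧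
      Ideal.Quotient.mk M (fun n : ℕ => 1 / ((n : ℝ) + 1)) ∉
        Set.range ((Ideal.Quotient.mk M).comp (Pi.constRingHom ℕ ℝ)) := by
  have : Nontrivial ((ℕ → ℝ) ⧸ M) := Ideal.Quotient.nontrivial_iff.mpr hM.ne_top
  have hzeros {s : ℕ → ℝ} (hs : s ∈ M) : {n | s n = 0}.Infinite :=
    M.infinite_setOf_eq_zero_of_mem hM.ne_top hez hs
  refine ⟨RingHom.injective _, fun h => ?_, ?_⟩
  · refine hzeros (Ideal.Quotient.eq_zero_iff_mem.mp h) (Set.finite_empty.subset fun n hn => ?_)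
    exact (by positivity : 1 / ((n : ℝ) + 1) ≠ 0) hn
  · rintro ⟨c, hc⟩
    refine hzeros (Ideal.Quotient.eq.mp hc) (Set.Subsingleton.finite fun m hm n hn => ?_)
    simp only [Set.mem_ofPred_eq, Pi.sub_apply, Pi.constRingHom_apply, sub_eq_zero] at hm hn
    exact injective_one_div_natCast_add_one (hm.symm.trans hn)
end
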